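/- Every partial representation of the universal enveloping algebra U(g) of a Lie algebra g is an algebra morphism. Consequently, U(g)_par ≅ U(g). -/

import Mathlib

open TensorProduct BigOperators HopfAlgebra

variable (k : Type) [CommRing k] (H : Type) [Ring H] [HopfAlgebra k H]

/-- `sw f g : H → T(H)` is the Sweedler convolution `x ↦ ∑ f(x₍₁₎) * g(x₍₂₎)`. -/
noncomputable def sw (f g : H →ₗ[k] TensorAlgebra k H) : H →ₗ[k] TensorAlgebra k H :=
  (LinearMap.mul' k (TensorAlgebra k H)) ∘ₗ (TensorProduct.map f g) ∘ₗ
    (Coalgebra.comul (R := k))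

/-- The defining relations of the universal partial "Hopf" algebra `H_par`,
imposed on the tensor algebra `T(H)`. -/
inductive HparRel : TensorAlgebra k H → TensorAlgebra k H → Prop
  | one : HparRel (TensorAlgebra.ι k (1 : H)) 1
  | pr2 (h x : H) : HparRel
      (TensorAlgebra.ι k h *
        sw k H (TensorAlgebra.ι k) ((TensorAlgebra.ι k) ∘ₗ antipode (R := k)) x)
      (sw k H ((TensorAlgebra.ι k) ∘ₗ LinearMap.mulLeft k h)
        ((TensorAlgebra.ι k) ∘ₗ antipode (R := k)) x)
  | pr3 (h x : H) : HparRel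
      (sw k H (TensorAlgebra.ι k) ((TensorAlgebra.ι k) ∘ₗ antipode (R := k)) h *
        TensorAlgebra.ι k x)
      (sw k H (TensorAlgebra.ι k)
        ((TensorAlgebra.ι k) ∘ₗ (LinearMap.mulRight k x) ∘ₗ antipode (R := k)) h)
  | pr4 (h x : H) : HparRel
      (TensorAlgebra.ι k h *
        sw k H ((TensorAlgebra.ι k) ∘ₗ antipode (R := k)) (TensorAlgebra.ι k) x)
      (sw k H ((TensorAlgebra.ι k) ∘ₗ (LinearMap.mulLeft k h) ∘ₗ antipode (R := k))
        (TensorAlgebra.ι k) x)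
  | pr5 (h x : H) : HparRel
      (sw k H ((TensorAlgebra.ι k) ∘ₗ antipode (R := k)) (TensorAlgebra.ι k) h *
        TensorAlgebra.ι k x)
      (sw k H ((TensorAlgebra.ι k) ∘ₗ antipode (R := k))
        ((TensorAlgebra.ι k) ∘ₗ LinearMap.mulRight k x) h)

/-- The universal partial "Hopf" algebra `H_par` of a Hopf algebra `H`. -/
abbrev Hpar : Type := RingQuot (HparRel k H)

/-- The canonical (universal) partial representation `h ↦ [h]` of `H` on `H_par`. -/
noncomputable def bracket : H →ₗ[k] Hpar k H :=
  (RingQuot.mkAlgHom k (HparRel k H)).toLinearMap ∘ₗ TensorAlgebra.ι k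

/-- A partial representation of a Hopf algebra `H` on an algebra `B` (axioms (PR1)-(PR5)),
stated using arbitrary finite Sweedler decompositions of the comultiplication. -/
def IsPartialRep {H : Type} [Ring H] [HopfAlgebra k H]
    {B : Type} [Ring B] [Algebra k B] (π : H →ₗ[k] B) : Prop :=
  π 1 = 1 ∧
  (∀ (h x : H) (n : ℕ) (x1 x2 : Fin n → H),
    Coalgebra.comul (R := k) x = ∑ i, x1 i ⊗ₜ[k] x2 i →
    π h * ∑ i, π (x1 i) * π (antipode (R := k) (x2 i)) =
      ∑ i, π (h * x1 i) * π (antipode (R := k) (x2 i))) ∧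
  (∀ (h x : H) (n : ℕ) (h1 h2 : Fin n → H),
    Coalgebra.comul (R := k) h = ∑ i, h1 i ⊗ₜ[k] h2 i →
    (∑ i, π (h1 i) * π (antipode (R := k) (h2 i))) * π x =
      ∑ i, π (h1 i) * π (antipode (R := k) (h2 i) * x)) ∧
  (∀ (h x : H) (n : ℕ) (x1 x2 : Fin n → H),
    Coalgebra.comul (R := k) x = ∑ i, x1 i ⊗ₜ[k] x2 i →
    π h * ∑ i, π (antipode (R := k) (x1 i)) * π (x2 i) =
      ∑ i, π (h * antipode (R := k) (x1 i)) * π (x2 i)) ∧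
  (∀ (h x : H) (n : ℕ) (h1 h2 : Fin n → H),
    Coalgebra.comul (R := k) h = ∑ i, h1 i ⊗ₜ[k] h2 i →
    (∑ i, π (antipode (R := k) (h1 i)) * π (h2 i)) * π x =
      ∑ i, π (antipode (R := k) (h1 i)) * π (h2 i * x))

/-!
For a primitive `x` (`Δx = x ⊗ 1 + 1 ⊗ x`, and `S 1 = 1`), axiom (PR2) reads
`π h * (π x + π (S x)) = π (h * x) + π h * π (S x)`, i.e. `π h * π x = π (h * x)`.
The `x` with `π h * π x = π (h * x)` for all `h` form a subalgebra, and `U(g)` is generated by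
the primitive elements `ι X`, so every partial representation of `U(g)` is multiplicative.
Applied to the universal partial representation `h ↦ [h]`, this makes `U(g) → U(g)_par` an
algebra map, inverse to the projection `U(g)_par → U(g)`, `[h] ↦ h`, given by the universal
property of `U(g)_par` for the partial representation `id`.
-/

theorem TensorProduct.exists_fin_sum_tmul {R M N : Type*} [CommSemiring R] [AddCommMonoid M]
    [AddCommMonoid N] [Module R M] [Module R N] (x : M ⊗[R] N) :
    ∃ (n : ℕ) (a : Fin n → M) (b : Fin n → N), x = ∑ i, a i ⊗ₜ[R] b i := by
  obtain ⟨S, rfl⟩ := TensorProduct.exists_finset x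
  refine ⟨S.card, fun i => (S.equivFin.symm i).1.1, fun i => (S.equivFin.symm i).1.2, ?_⟩
  rw [← Finset.sum_coe_sort, ← Equiv.sum_comp S.equivFin.symm]

theorem UniversalEnvelopingAlgebra.adjoin_range_ι (R L : Type*) [CommRing R] [LieRing L]
    [LieAlgebra R L] : Algebra.adjoin R (Set.range (ι R (L := L))) = ⊤ := by
  have hrange : Set.range (ι R (L := L)) = mkAlgHom R L '' Set.range (TensorAlgebra.ι R) := by
    rw [← Set.range_comp]
    rfl
  rw [hrange, Algebra.adjoin_image, TensorAlgebra.adjoin_range_ι, Algebra.map_top,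
    AlgHom.range_eq_top]
  exact RingCon.mkₐ_surjective _

section RightMultiplicative

variable {k} {A B : Type*} [Ring A] [Algebra k A] [Ring B] [Algebra k B]

def LinearMap.rightMultiplicativeSubalgebra (π : A →ₗ[k] B) (h1 : π 1 = 1) : Subalgebra k A where
  carrier := {x | ∀ h, π h * π x = π (h * x)}
  mul_mem' {a b} ha hb h := by rw [← hb a, ← mul_assoc, ha h, hb (h * a), mul_assoc]
  one_mem' h := by simp [h1]
  add_mem' ha hb h := by simp only [map_add, mul_add, ha h, hb h]
  algebraMap_mem' c h := by simp [Algebra.algebraMap_eq_smul_one, h1]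

theorem LinearMap.map_mul_of_adjoin_eq_top {π : A →ₗ[k] B} (h1 : π 1 = 1) {s : Set A}
    (hs : Algebra.adjoin k s = ⊤) (hmul : ∀ x ∈ s, ∀ h, π h * π x = π (h * x)) (h x : A) :
    π h * π x = π (h * x) := by
  have hle : Algebra.adjoin k s ≤ π.rightMultiplicativeSubalgebra h1 := Algebra.adjoin_le hmul
  exact hle (hs ▸ Algebra.mem_top) h

end RightMultiplicative

section PartialRep

variable {k H} {B : Type} [Ring B] [Algebra k B]

theorem IsPartialRep.map_mul_of_comul_eq {π : H →ₗ[k] B} (hπ : IsPartialRep k π) {x : H}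
    (hx : Coalgebra.comul (R := k) x = x ⊗ₜ[k] 1 + 1 ⊗ₜ[k] x) (h : H) :
    π h * π x = π (h * x) := by
  have pr2 := hπ.2.1 h x 2 ![x, 1] ![1, x] (by simpa [Fin.sum_univ_two] using hx)
  simp only [Fin.sum_univ_two, Matrix.cons_val_zero, Matrix.cons_val_one, antipode_one, hπ.1,
    mul_one, one_mul, mul_add] at pr2
  exact add_right_cancel pr2

theorem IsPartialRep.map_mul_of_adjoin_primitive_eq_top {π : H →ₗ[k] B} (hπ : IsPartialRep k π)
    {s : Set H} (hs : Algebra.adjoin k s = ⊤)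
    (hprim : ∀ x ∈ s, Coalgebra.comul (R := k) x = x ⊗ₜ[k] 1 + 1 ⊗ₜ[k] x) (h x : H) :
    π h * π x = π (h * x) :=
  LinearMap.map_mul_of_adjoin_eq_top hπ.1 hs (fun x hx => hπ.map_mul_of_comul_eq (hprim x hx)) h x

theorem AlgHom.isPartialRep (φ : H →ₐ[k] B) : IsPartialRep k φ.toLinearMap := by
  refine ⟨map_one φ, ?_, ?_, ?_, ?_⟩ <;>
    intros <;> simp [Finset.mul_sum, Finset.sum_mul, mul_assoc]

theorem sw_eq_sum (f g : H →ₗ[k] TensorAlgebra k H) {x : H} {n : ℕ} {x1 x2 : Fin n → H}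
    (hx : Coalgebra.comul (R := k) x = ∑ i, x1 i ⊗ₜ[k] x2 i) :
    sw k H f g x = ∑ i, f (x1 i) * g (x2 i) := by
  simp [sw, hx, map_sum]

theorem IsPartialRep.lift_eq_of_hparRel {π : H →ₗ[k] B} (hπ : IsPartialRep k π)
    {a b : TensorAlgebra k H} (hab : HparRel k H a b) :
    TensorAlgebra.lift k π a = TensorAlgebra.lift k π b := by
  obtain ⟨pr1, pr2, pr3, pr4, pr5⟩ := hπ
  induction hab with
  | one => simpa using pr1
  | pr2 h x =>
    obtain ⟨n, x1, x2, hx⟩ := TensorProduct.exists_fin_sum_tmul (Coalgebra.comul (R := k) x)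
    simpa [sw_eq_sum _ _ hx, map_sum] using pr2 h x n x1 x2 hx
  | pr3 h x =>
    obtain ⟨n, h1, h2, hh⟩ := TensorProduct.exists_fin_sum_tmul (Coalgebra.comul (R := k) h)
    simpa [sw_eq_sum _ _ hh, map_sum] using pr3 h x n h1 h2 hh
  | pr4 h x =>
    obtain ⟨n, x1, x2, hx⟩ := TensorProduct.exists_fin_sum_tmul (Coalgebra.comul (R := k) x)
    simpa [sw_eq_sum _ _ hx, map_sum] using pr4 h x n x1 x2 hx
  | pr5 h x =>
    obtain ⟨n, h1, h2, hh⟩ := TensorProduct.exists_fin_sum_tmul (Coalgebra.comul (R := k) h)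
    simpa [sw_eq_sum _ _ hh, map_sum] using pr5 h x n h1 h2 hh

noncomputable def Hpar.lift (π : H →ₗ[k] B) (hπ : IsPartialRep k π) : Hpar k H →ₐ[k] B :=
  RingQuot.liftAlgHom k ⟨TensorAlgebra.lift k π, fun _ _ => hπ.lift_eq_of_hparRel⟩

@[simp]
theorem Hpar.lift_bracket (π : H →ₗ[k] B) (hπ : IsPartialRep k π) (h : H) :
    Hpar.lift π hπ (bracket k H h) = π h := by
  simp [Hpar.lift, bracket]

theorem bracket_one : bracket k H 1 = 1 := by
  simpa [bracket] using RingQuot.mkAlgHom_rel k (HparRel.one (k := k) (H := H))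

theorem isPartialRep_bracket : IsPartialRep k (bracket k H) := by
  refine ⟨bracket_one, ?_, ?_, ?_, ?_⟩
  · intro h x n x1 x2 hx
    simpa [sw_eq_sum _ _ hx, bracket, map_sum] using
      RingQuot.mkAlgHom_rel k (HparRel.pr2 (k := k) (H := H) h x)
  · intro h x n h1 h2 hh
    simpa [sw_eq_sum _ _ hh, bracket, map_sum] using
      RingQuot.mkAlgHom_rel k (HparRel.pr3 (k := k) (H := H) h x)
  · intro h x n x1 x2 hx
    simpa [sw_eq_sum _ _ hx, bracket, map_sum] using
      RingQuot.mkAlgHom_rel k (HparRel.pr4 (k := k) (H := H) h x)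
  · intro h x n h1 h2 hh
    simpa [sw_eq_sum _ _ hh, bracket, map_sum] using
      RingQuot.mkAlgHom_rel k (HparRel.pr5 (k := k) (H := H) h x)

noncomputable def Hpar.algEquivOfBracketMul
    (hmul : ∀ h x : H, bracket k H h * bracket k H x = bracket k H (h * x)) :
    Hpar k H ≃ₐ[k] H :=
  AlgEquiv.ofAlgHom (Hpar.lift _ (AlgHom.id k H).isPartialRep)
    (AlgHom.ofLinearMap (bracket k H) bracket_one fun a b => (hmul a b).symm)
    (AlgHom.ext fun u => by simp)
    (RingQuot.ringQuot_ext' _ _ _ <| TensorAlgebra.hom_ext <| LinearMap.ext fun u =>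
      congrArg (bracket k H) (Hpar.lift_bracket _ _ u))

end PartialRep

theorem universalEnveloping_partialRep_is_morphism_general (k : Type) [CommRing k]
    (L : Type) [LieRing L] [LieAlgebra k L]
    (U : Type) [Ring U] [HopfAlgebra k U]
    (f : UniversalEnvelopingAlgebra k L ≃ₐ[k] U)
    (hcomul : ∀ X : L, Coalgebra.comul (R := k) (f (UniversalEnvelopingAlgebra.ι k X)) =
      (f (UniversalEnvelopingAlgebra.ι k X)) ⊗ₜ[k] (1 : U) +
        (1 : U) ⊗ₜ[k] (f (UniversalEnvelopingAlgebra.ι k X))) :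
    (∀ (B : Type) (_ : Ring B) (_ : Algebra k B), ∀ π : U →ₗ[k] B, IsPartialRep k π →
        ∀ h x : U, π h * π x = π (h * x)) ∧
    Nonempty (Hpar k U ≃ₐ[k] U) := by
  have generated :
      Algebra.adjoin k (Set.range fun X => f (UniversalEnvelopingAlgebra.ι k X)) = ⊤ := by
    rw [show (Set.range fun X => f (UniversalEnvelopingAlgebra.ι k X)) =
        f.toAlgHom '' Set.range (UniversalEnvelopingAlgebra.ι k) from Set.range_comp _ _,
      Algebra.adjoin_image, UniversalEnvelopingAlgebra.adjoin_range_ι, Algebra.map_top,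
      AlgHom.range_eq_top]
    exact f.surjective
  have multiplicative : ∀ (B : Type) (_ : Ring B) (_ : Algebra k B), ∀ π : U →ₗ[k] B,
      IsPartialRep k π → ∀ h x : U, π h * π x = π (h * x) := fun _ _ _ _ hπ =>
    hπ.map_mul_of_adjoin_primitive_eq_top generated (by rintro _ ⟨X, rfl⟩; exact hcomul X)
  exact ⟨multiplicative, ⟨Hpar.algEquivOfBracketMul (multiplicative _ _ _ _ isPartialRep_bracket)⟩⟩

/-- For the universal enveloping algebra `U(g)` of a Lie algebra `g` —
formalized as a Hopf algebra `U` whose underlying algebra is `U(g)` (via an algebra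
isomorphism `f`), in which the generators `f(ι X)` are primitive, `S(f(ι X)) = -f(ι X)`
and `ε(f(ι X)) = 0` — every partial representation of `U` is an algebra morphism;
consequently `U(g)_par ≅ U(g)` as algebras. -/
theorem universalEnveloping_partialRep_is_morphism (k : Type) [CommRing k]
    (L : Type) [LieRing L] [LieAlgebra k L]
    (U : Type) [Ring U] [HopfAlgebra k U]
    (f : UniversalEnvelopingAlgebra k L ≃ₐ[k] U)
    (hcomul : ∀ X : L, Coalgebra.comul (R := k) (f (UniversalEnvelopingAlgebra.ι k X)) =
      (f (UniversalEnvelopingAlgebra.ι k X)) ⊗ₜ[k] (1 : U) +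
        (1 : U) ⊗ₜ[k] (f (UniversalEnvelopingAlgebra.ι k X)))
    (hcounit : ∀ X : L,
      Coalgebra.counit (R := k) (A := U) (f (UniversalEnvelopingAlgebra.ι k X)) = 0)
    (hantipode : ∀ X : L, antipode (R := k) (f (UniversalEnvelopingAlgebra.ι k X)) =
      - f (UniversalEnvelopingAlgebra.ι k X)) :
    (∀ (B : Type) (_ : Ring B) (_ : Algebra k B), ∀ π : U →ₗ[k] B, IsPartialRep k π →
        ∀ h x : U, π h * π x = π (h * x)) ∧
    Nonempty (Hpar k U ≃ₐ[k] U) :=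
  universalEnveloping_partialRep_is_morphism_general k L U f hcomul
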